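/- arXiv:2602.17723 — 2 statements merged into one kernel-verified Lean document; each statement's English description precedes it below -/
import Mathlib

section
/- Let f, g : ℝ → ℝ be continuous, supported on [0, ∞), and of exponential order with constant c. Define the convolution (f * g)(t) = ∫₀^t f(t - s) g(s) ds. Then for 0 < v < 1/c, S[f * g](v) = v · S[f](v) · S[g](v). -/
/-!
Multiplying by the weight `exp (-t / v)` commutes with the convolution, because
`exp (-t / v) = exp (-(t - s) / v) * exp (-s / v)`. The exponential-order bound with `c < 1 / v`
makes the weighted functions integrable, and all functions involved vanish on `(-∞, 0)`, so the
Sumudu integrals over `(0, ∞)` are integrals over `ℝ` and the truncated convolution is the full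
one. The theorem is then Fubini's theorem for convolutions: `∫ (F ⋆ G) = (∫ F) * (∫ G)`.
-/

open MeasureTheory Real Set

noncomputable def sumudu (f : ℝ → ℝ) (v : ℝ) : ℝ :=
  (1 / v) * ∫ t in Ioi (0:ℝ), Real.exp (-t / v) * f t

noncomputable def conv (f g : ℝ → ℝ) (t : ℝ) : ℝ :=
  ∫ s in (0:ℝ)..t, f (t - s) * g s

theorem setIntegral_Ioi_eq_integral_of_eq_zero {h : ℝ → ℝ} (hh : ∀ t < (0:ℝ), h t = 0) :
    ∫ t in Ioi (0:ℝ), h t = ∫ t, h t := by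
  rw [← integral_Ici_eq_integral_Ioi]
  exact setIntegral_eq_integral_of_forall_compl_eq_zero fun t ht => hh t (not_le.1 ht)

theorem integrable_exp_mul_of_le_exp {h : ℝ → ℝ} {M c v : ℝ} (hcv : c < 1 / v)
    (hmeas : AEStronglyMeasurable h) (hh : ∀ t < (0:ℝ), h t = 0)
    (hbound : ∀ t ≥ (0:ℝ), |h t| ≤ M * exp (c * t)) :
    Integrable (fun t => exp (-t / v) * h t) := by
  have hsupp : indicator (Ici 0) (fun t => exp (-t / v) * h t) = fun t => exp (-t / v) * h t := by
    refine indicator_eq_self.2 fun t ht => mem_Ici.2 (not_lt.1 fun hneg => ht ?_)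
    simp [hh t hneg]
  rw [← hsupp, integrable_indicator_iff measurableSet_Ici, integrableOn_Ici_iff_integrableOn_Ioi]
  refine Integrable.mono' ((exp_neg_integrableOn_Ioi 0 (sub_pos.2 hcv)).const_mul M)
    (((continuous_exp.comp (continuous_neg.div_const v)).aestronglyMeasurable.mul hmeas).restrict)
    ((ae_restrict_iff' measurableSet_Ioi).2 (ae_of_all _ fun t (ht : 0 < t) => ?_))
  have hexp : exp (-t / v) * exp (c * t) = exp (-(1 / v - c) * t) := by
    rw [← exp_add]; ring_nf
  calc ‖exp (-t / v) * h t‖ = exp (-t / v) * |h t| := by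
        rw [Real.norm_eq_abs, abs_mul, abs_of_pos (exp_pos _)]
    _ ≤ exp (-t / v) * (M * exp (c * t)) := by gcongr; exact hbound t ht.le
    _ = M * exp (-(1 / v - c) * t) := by rw [← hexp]; ring

section conv

variable {f g : ℝ → ℝ}

theorem conv_integrand_eq_zero_of_notMem_Icc (hf : ∀ t < (0:ℝ), f t = 0)
    (hg : ∀ t < (0:ℝ), g t = 0) {t s : ℝ} (hs : s ∉ Icc 0 t) : f (t - s) * g s = 0 := by
  rcases not_and_or.1 hs with hs | hs
  · rw [hg s (not_le.1 hs), mul_zero]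
  · rw [hf (t - s) (by linarith [not_le.1 hs]), zero_mul]

theorem conv_eq_zero_of_neg (hf : ∀ t < (0:ℝ), f t = 0) (hg : ∀ t < (0:ℝ), g t = 0)
    {t : ℝ} (ht : t < 0) : conv f g t = 0 := by
  have hempty : ∀ s, s ∉ Icc 0 t := fun s hs => absurd (hs.1.trans hs.2) (not_le.2 ht)
  rw [conv, intervalIntegral.integral_congr (g := fun _ => 0)
      fun s _ => conv_integrand_eq_zero_of_notMem_Icc hf hg (hempty s),
    intervalIntegral.integral_zero]

theorem conv_eq_integral (hf : ∀ t < (0:ℝ), f t = 0) (hg : ∀ t < (0:ℝ), g t = 0) (t : ℝ) :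
    conv f g t = ∫ s, f (t - s) * g s := by
  rcases lt_or_ge t 0 with ht | ht
  · rw [conv_eq_zero_of_neg hf hg ht, eq_comm]
    exact integral_eq_zero_of_ae (ae_of_all _ fun s =>
      conv_integrand_eq_zero_of_notMem_Icc hf hg fun hs => absurd (hs.1.trans hs.2) (not_le.2 ht))
  · rw [← setIntegral_eq_integral_of_forall_compl_eq_zero
        fun s => conv_integrand_eq_zero_of_notMem_Icc hf hg,
      integral_Icc_eq_integral_Ioc, conv, intervalIntegral.integral_of_le ht]

theorem integral_conv (hf : ∀ t < (0:ℝ), f t = 0) (hg : ∀ t < (0:ℝ), g t = 0)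
    (hfi : Integrable f) (hgi : Integrable g) :
    ∫ t, conv f g t = (∫ t, f t) * ∫ t, g t := by
  have := integral_convolution (L := ContinuousLinearMap.mul ℝ ℝ) hgi hfi
  simp only [convolution_def, ContinuousLinearMap.mul_apply'] at this
  simp_rw [conv_eq_integral hf hg, mul_comm (f _)]
  rw [this, mul_comm]

theorem exp_mul_conv (v t : ℝ) :
    exp (-t / v) * conv f g t
      = conv (fun t => exp (-t / v) * f t) (fun t => exp (-t / v) * g t) t := by
  have hsplit : ∀ s, exp (-t / v) * (f (t - s) * g s)
      = exp (-(t - s) / v) * f (t - s) * (exp (-s / v) * g s) := fun s => by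
    rw [show -t / v = -(t - s) / v + -s / v by ring, exp_add]; ring
  simp only [conv, ← intervalIntegral.integral_const_mul, hsplit]

end conv

theorem sumudu_eq_integral {h : ℝ → ℝ} (hh : ∀ t < (0:ℝ), h t = 0) (v : ℝ) :
    sumudu h v = (1 / v) * ∫ t, exp (-t / v) * h t := by
  rw [sumudu, setIntegral_Ioi_eq_integral_of_eq_zero fun t ht => by simp [hh t ht]]

theorem sumudu_convolution_general (f g : ℝ → ℝ) (M c : ℝ)
    (hfc : Continuous f) (hgc : Continuous g)
    (hfsupp : ∀ t < (0:ℝ), f t = 0) (hgsupp : ∀ t < (0:ℝ), g t = 0)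
    (hfbound : ∀ t ≥ (0:ℝ), |f t| ≤ M * Real.exp (c * t))
    (hgbound : ∀ t ≥ (0:ℝ), |g t| ≤ M * Real.exp (c * t)) :
    ∀ v : ℝ, 0 < v → v < 1 / c →
      sumudu (conv f g) v = v * sumudu f v * sumudu g v := by
  intro v hv hvc
  have hcv : c < 1 / v := by
    have hc : 0 < c := one_div_pos.1 (hv.trans hvc)
    rwa [lt_one_div hc hv]
  have weighted_zero {h : ℝ → ℝ} (hh : ∀ t < (0:ℝ), h t = 0) :
      ∀ t < (0:ℝ), exp (-t / v) * h t = 0 := fun t ht => by rw [hh t ht, mul_zero]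
  rw [sumudu_eq_integral (fun t => conv_eq_zero_of_neg hfsupp hgsupp) v,
    sumudu_eq_integral hfsupp, sumudu_eq_integral hgsupp]
  simp_rw [exp_mul_conv v]
  rw [integral_conv (weighted_zero hfsupp) (weighted_zero hgsupp)
    (integrable_exp_mul_of_le_exp hcv hfc.aestronglyMeasurable hfsupp hfbound)
    (integrable_exp_mul_of_le_exp hcv hgc.aestronglyMeasurable hgsupp hgbound)]
  field_simp

theorem sumudu_convolution (f g : ℝ → ℝ) (M c : ℝ) (hM : 0 < M) (hc : 0 < c)
    (hfc : Continuous f) (hgc : Continuous g)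
    (hfsupp : ∀ t < (0:ℝ), f t = 0) (hgsupp : ∀ t < (0:ℝ), g t = 0)
    (hfbound : ∀ t ≥ (0:ℝ), |f t| ≤ M * Real.exp (c * t))
    (hgbound : ∀ t ≥ (0:ℝ), |g t| ≤ M * Real.exp (c * t)) :
    ∀ v : ℝ, 0 < v → v < 1 / c →
      sumudu (conv f g) v = v * sumudu f v * sumudu g v :=
  sumudu_convolution_general f g M c hfc hgc hfsupp hgsupp hfbound hgbound
end

section
/- Let γ ∈ (0,1), N(γ) > 0, and f as in the wsk-derivative setting (C¹ on [0,∞), exponential order c). For 0 < v < min(1/c, (1-γ)/γ), the Sumudu transform of Df(t) = (N(γ)/(1-γ)) ∫₀^t e^{-(γ/(1-γ))(t-τ)} f'(τ) dτ satisfies S[Df](v) = (N(γ)/(1-γ)) · (S[f](v) - f(0)) / (1 + (γ/(1-γ)) v). -/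
/-!
Put `s = 1/v` and `k = γ/(1-γ)`, so that `S[g](v) = s · L[g](s)` for the Laplace transform `L`.
Multiplying the convolution `(e^{-k·} ⋆ f')(t)` by `e^{kt}` gives the primitive
`G(t) = ∫₀^t e^{kτ} f'(τ) dτ`, hence `L[e^{-k·} ⋆ f'](s) = L[G](s + k)`, and integration by parts
(with `G(0) = 0`) turns this into `L[G'](s + k) / (s + k) = L[f'](s) / (s + k)`. A second integration
by parts, `L[f'](s) = s L[f](s) - f(0)`, gives the formula. All boundary terms at infinity vanish
because `f`, `f'` and `G` have exponential order below `s` (resp. `s + k`).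
-/

open MeasureTheory Real Set

open Filter Topology

noncomputable def laplace (g : ℝ → ℝ) (s : ℝ) : ℝ :=
  ∫ t in Ioi (0:ℝ), exp (-s * t) * g t

theorem sumudu_eq_laplace (g : ℝ → ℝ) (v : ℝ) : sumudu g v = 1 / v * laplace g (1 / v) := by
  simp only [sumudu, laplace, neg_div, one_div, neg_mul, inv_mul_eq_div]

theorem laplace_congr {g h : ℝ → ℝ} (hgh : ∀ t > 0, g t = h t) (s : ℝ) :
    laplace g s = laplace h s :=
  setIntegral_congr_fun measurableSet_Ioi fun t ht => by rw [hgh t ht]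

theorem laplace_const_mul (C : ℝ) (g : ℝ → ℝ) (s : ℝ) :
    laplace (fun t => C * g t) s = C * laplace g s := by
  simp only [laplace, mul_left_comm _ C, integral_const_mul]

theorem laplace_exp_neg_mul (k : ℝ) (g : ℝ → ℝ) (s : ℝ) :
    laplace (fun t => exp (-k * t) * g t) s = laplace g (s + k) := by
  refine setIntegral_congr_fun measurableSet_Ioi fun t _ => ?_
  rw [← mul_assoc, ← exp_add]
  ring_nf

section ExponentialOrder

variable {g : ℝ → ℝ} {A b s : ℝ}

theorem norm_exp_neg_mul_mul_le (hbound : ∀ t ≥ 0, |g t| ≤ A * exp (b * t)) {t : ℝ}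
    (ht : 0 ≤ t) :
    ‖exp (-s * t) * g t‖ ≤ A * exp (-(s - b) * t) := by
  calc ‖exp (-s * t) * g t‖ = exp (-s * t) * |g t| := by
        rw [norm_mul, norm_of_nonneg (exp_pos _).le, Real.norm_eq_abs]
    _ ≤ exp (-s * t) * (A * exp (b * t)) := by gcongr; exact hbound t ht
    _ = A * exp (-(s - b) * t) := by rw [mul_left_comm, ← exp_add]; ring_nf

theorem integrableOn_exp_neg_mul_mul (hg : ContinuousOn g (Ioi 0))
    (hbound : ∀ t ≥ 0, |g t| ≤ A * exp (b * t)) (hbs : b < s) :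
    IntegrableOn (fun t => exp (-s * t) * g t) (Ioi 0) := by
  refine Integrable.mono' ((exp_neg_integrableOn_Ioi 0 (sub_pos.2 hbs)).const_mul A) ?_ ?_
  · exact ((continuous_exp.comp (continuous_const_mul (-s))).continuousOn.mul hg
      ).aestronglyMeasurable measurableSet_Ioi
  · filter_upwards [ae_restrict_mem measurableSet_Ioi] with t ht
    exact norm_exp_neg_mul_mul_le hbound (le_of_lt ht)

theorem tendsto_exp_neg_mul_mul (hbound : ∀ t ≥ 0, |g t| ≤ A * exp (b * t)) (hbs : b < s) :
    Tendsto (fun t => exp (-s * t) * g t) atTop (𝓝 0) := by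
  refine squeeze_zero_norm' ?_ (?_ : Tendsto (fun t => A * exp (-(s - b) * t)) atTop (𝓝 0))
  · filter_upwards [eventually_ge_atTop 0] with t ht
    exact norm_exp_neg_mul_mul_le hbound ht
  · simpa only [Function.comp_def, id_eq, neg_mul, mul_zero] using
      (tendsto_exp_neg_atTop_nhds_zero.comp (tendsto_id.const_mul_atTop (sub_pos.2 hbs))).const_mul A

theorem abs_integral_le_of_abs_le_exp (hb : 0 < b) {t : ℝ} (ht : 0 ≤ t)
    (hg : IntervalIntegrable g volume 0 t) (hbound : ∀ τ ≥ 0, |g τ| ≤ A * exp (b * τ)) :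
    |∫ τ in (0:ℝ)..t, g τ| ≤ A / b * exp (b * t) := by
  have hA : 0 ≤ A := by simpa using (abs_nonneg _).trans (hbound 0 le_rfl)
  calc |∫ τ in (0:ℝ)..t, g τ| ≤ ∫ τ in (0:ℝ)..t, |g τ| :=
        intervalIntegral.abs_integral_le_integral_abs ht
    _ ≤ ∫ τ in (0:ℝ)..t, A * exp (b * τ) :=
        intervalIntegral.integral_mono_on ht hg.abs
          (Continuous.intervalIntegrable (by fun_prop) 0 t)
          fun τ hτ => hbound τ hτ.1
    _ = A / b * (exp (b * t) - 1) := by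
        rw [intervalIntegral.integral_const_mul,
          intervalIntegral.integral_comp_mul_left (fun x => exp x) hb.ne', integral_exp]
        simp only [mul_zero, exp_zero, smul_eq_mul, div_eq_mul_inv]
        ring
    _ ≤ A / b * exp (b * t) := by gcongr; linarith

end ExponentialOrder

theorem laplace_deriv {g g' : ℝ → ℝ} {A B b s : ℝ} (hg0 : ContinuousWithinAt g (Ici 0) 0)
    (hderiv : ∀ t > 0, HasDerivAt g (g' t) t) (hg' : ContinuousOn g' (Ioi 0))
    (hgbound : ∀ t ≥ 0, |g t| ≤ A * exp (b * t)) (hg'bound : ∀ t ≥ 0, |g' t| ≤ B * exp (b * t))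
    (hbs : b < s) :
    laplace g' s = s * laplace g s - g 0 := by
  have hg : ContinuousOn g (Ioi 0) := fun t ht => (hderiv t ht).continuousAt.continuousWithinAt
  have hexp : ∀ t ∈ Ioi (0:ℝ), HasDerivAt (fun t => exp (-s * t)) (-s * exp (-s * t)) t :=
    fun t _ => by simpa [mul_comm] using ((hasDerivAt_id t).const_mul (-s)).exp
  have h_zero : Tendsto (fun t => exp (-s * t) * g t) (𝓝[>] 0) (𝓝 (exp (-s * 0) * g 0)) :=
    ((continuous_exp.comp (continuous_const_mul (-s))).continuousWithinAt.mul hg0).mono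
      Ioi_subset_Ici_self
  have h := integral_Ioi_mul_deriv_eq_deriv_mul hexp hderiv
    (integrableOn_exp_neg_mul_mul hg' hg'bound hbs)
    (by rw [IntegrableOn]; simpa only [Pi.mul_def, mul_assoc] using
      (integrableOn_exp_neg_mul_mul hg hgbound hbs).const_mul (-s)) h_zero
    (tendsto_exp_neg_mul_mul hgbound hbs)
  simp only [mul_assoc, integral_const_mul, mul_zero, exp_zero, one_mul] at h
  rw [laplace, laplace, h]
  ring

theorem laplace_conv_exp_neg_mul {g : ℝ → ℝ} {M c k s : ℝ}
    (hg : ContinuousOn g (Ici 0)) (hbound : ∀ t ≥ 0, |g t| ≤ M * exp (c * t))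
    (hck : 0 < c + k) (hcs : c < s) :
    laplace (fun t => ∫ τ in (0:ℝ)..t, exp (-k * (t - τ)) * g τ) s = laplace g s / (s + k) := by
  -- extending `g` constantly to the left of `0` makes its primitive differentiable at `0`
  set ge : ℝ → ℝ := fun τ => g (max τ 0)
  have hge : ∀ τ ≥ 0, ge τ = g τ := fun τ hτ => by simp only [ge, max_eq_left hτ]
  set h : ℝ → ℝ := fun τ => exp (k * τ) * ge τ
  have hh : Continuous h := (continuous_exp.comp (continuous_const_mul k)).mul
    (hg.comp_continuous (continuous_id.max continuous_const) fun τ => le_max_right τ 0)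
  have hhbound : ∀ t ≥ 0, |h t| ≤ M * exp ((c + k) * t) := fun t ht => by
    rw [abs_mul, abs_of_pos (exp_pos _), hge t ht, add_mul, exp_add]
    nlinarith [hbound t ht, exp_pos (k * t)]
  set G : ℝ → ℝ := fun t => ∫ τ in (0:ℝ)..t, h τ
  have hG : ∀ t, HasDerivAt G (h t) t := fun t => (hh.integral_hasStrictDerivAt 0 t).hasDerivAt
  have hGbound : ∀ t ≥ 0, |G t| ≤ M / (c + k) * exp ((c + k) * t) := fun t ht =>
    abs_integral_le_of_abs_le_exp hck ht (hh.intervalIntegrable 0 t) hhbound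
  have hconv : ∀ t > 0, ∫ τ in (0:ℝ)..t, exp (-k * (t - τ)) * g τ = exp (-k * t) * G t := by
    intro t ht
    rw [← intervalIntegral.integral_const_mul]
    refine intervalIntegral.integral_congr fun τ hτ => ?_
    rw [uIcc_of_le ht.le] at hτ
    simp only [h, hge τ hτ.1, ← mul_assoc, ← exp_add]
    congr 2
    ring
  have hshift : laplace h (s + k) = laplace g s := by
    rw [← laplace_exp_neg_mul]
    refine laplace_congr (fun t ht => ?_) s
    simp only [h, hge t ht.le, ← mul_assoc, ← exp_add, neg_mul, neg_add_cancel, exp_zero, one_mul]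
  have hibp := laplace_deriv (hG 0).continuousAt.continuousWithinAt (fun t _ => hG t)
    hh.continuousOn hGbound hhbound (by linarith : c + k < s + k)
  have hsk : s + k ≠ 0 := by linarith
  have hG0 : G 0 = 0 := intervalIntegral.integral_same
  rw [laplace_congr hconv, laplace_exp_neg_mul, ← hshift, hibp, hG0]
  field_simp
  ring

theorem sumudu_wsk_deriv_general (γ : ℝ) (hγ : γ ∈ Set.Ioo (0:ℝ) 1)
    (N : ℝ → ℝ)
    (f f' : ℝ → ℝ) (M c : ℝ) (hc : 0 < c)
    (hderiv : ∀ t ≥ (0:ℝ), HasDerivAt f (f' t) t)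
    (hcont : ContinuousOn f' (Ici 0))
    (hfbound : ∀ t ≥ (0:ℝ), |f t| ≤ M * Real.exp (c * t))
    (hf'bound : ∀ t ≥ (0:ℝ), |f' t| ≤ M * Real.exp (c * t)) :
    ∀ v : ℝ, 0 < v → v < min (1 / c) ((1 - γ) / γ) →
      sumudu (fun t => (N γ / (1 - γ)) *
          ∫ τ in (0:ℝ)..t, Real.exp (-(γ / (1 - γ)) * (t - τ)) * f' τ) v =
        (N γ / (1 - γ)) * (sumudu f v - f 0) / (1 + (γ / (1 - γ)) * v) := by
  intro v hv hvc
  have hk : 0 < γ / (1 - γ) := div_pos hγ.1 (sub_pos.2 hγ.2)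
  have hcv : c < 1 / v := (lt_one_div hc hv).2 (hvc.trans_le (min_le_left _ _))
  have hf := laplace_deriv (hderiv 0 le_rfl).continuousAt.continuousWithinAt
    (fun t ht => hderiv t ht.le) (hcont.mono Ioi_subset_Ici_self) hfbound hf'bound hcv
  rw [sumudu_eq_laplace, sumudu_eq_laplace, laplace_const_mul,
    laplace_conv_exp_neg_mul hcont hf'bound (by linarith) hcv, hf]
  field_simp

theorem sumudu_wsk_deriv (γ : ℝ) (hγ : γ ∈ Set.Ioo (0:ℝ) 1)
    (N : ℝ → ℝ) (hN : 0 < N γ)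
    (f f' : ℝ → ℝ) (M c : ℝ) (hM : 0 < M) (hc : 0 < c)
    (hderiv : ∀ t ≥ (0:ℝ), HasDerivAt f (f' t) t)
    (hcont : ContinuousOn f' (Ici 0))
    (hfbound : ∀ t ≥ (0:ℝ), |f t| ≤ M * Real.exp (c * t))
    (hf'bound : ∀ t ≥ (0:ℝ), |f' t| ≤ M * Real.exp (c * t)) :
    ∀ v : ℝ, 0 < v → v < min (1 / c) ((1 - γ) / γ) →
      sumudu (fun t => (N γ / (1 - γ)) *
          ∫ τ in (0:ℝ)..t, Real.exp (-(γ / (1 - γ)) * (t - τ)) * f' τ) v =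
        (N γ / (1 - γ)) * (sumudu f v - f 0) / (1 + (γ / (1 - γ)) * v) :=
  sumudu_wsk_deriv_general γ hγ N f f' M c hc hderiv hcont hfbound hf'bound
end
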